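/- For every Gauss code D there exists a set S of chords of D such that the Gauss code obtained from D by the crossing change at S can be transformed into the empty code by a finite sequence of C1 and W moves alone. -/

import Mathlib

/-!
Gauss codes for welded knots.

A Gauss code is a cyclic word in which each chord label occurs exactly twice,
once as a tail (`isHead = false`) and once as a head (`isHead = true`), both
occurrences carrying the common sign of the chord.  We represent the cyclic
word by a linear list of entries, working up to rotation (`List.rotate`) and
injective relabelling of the chords.
-/

/-- An endpoint of a chord: `(chord label, isHead, sign)`, where `isHead = false`
means a tail (over-passing) endpoint and `isHead = true` a head (under-passing)
endpoint, and the sign `true`/`false` stands for `+1`/`-1`. -/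
abbrev GEntry : Type := ℕ × Bool × Bool

/-- A (linear representative of a cyclic) word of endpoints. -/
abbrev GWord : Type := List GEntry

/-- The set of chord labels occurring in a word. -/
def chordSet (w : GWord) : Set ℕ := {a | ∃ e ∈ w, e.1 = a}

/-- `w` is a Gauss code: every chord label that occurs in `w` occurs exactly
twice, once as a tail and once as a head, with a common sign. -/
def IsGaussCode (w : GWord) : Prop :=
  ∀ a ∈ chordSet w,
    w.countP (fun e => e.1 == a) = 2 ∧
    ∃ s : Bool, (a, false, s) ∈ w ∧ (a, true, s) ∈ w

/-- The crossing change at the set `S` of chords: at every chord of `S`, the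
tail and head markings of its two occurrences are exchanged and its sign is
reversed. -/
def crossingChange (S : Finset ℕ) (w : GWord) : GWord :=
  w.map fun e => if e.1 ∈ S then (e.1, !e.2.1, !e.2.2) else e

/-- Deletion of the chord `a` (both of its endpoints) from the word. -/
def deleteChord (a : ℕ) (w : GWord) : GWord :=
  w.filter fun e => e.1 != a

/-- Equality of words up to cyclic permutation. -/
def RotEq (w w' : GWord) : Prop := ∃ n : ℕ, w' = w.rotate n

/-- Renaming the chords of a word by `f`. -/
def relabelWord (f : ℕ → ℕ) (w : GWord) : GWord := w.map fun e => (f e.1, e.2)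

/-- Equality of words up to cyclic permutation and (injective) renaming of
the chords. -/
def CyclicRename (w w' : GWord) : Prop :=
  ∃ (n : ℕ) (f : ℕ → ℕ), Function.Injective f ∧ w' = relabelWord f (w.rotate n)

/-- Raw C1 move (deleting direction): deletion of a chord whose two endpoints
occupy adjacent positions; the inserting direction is the converse relation. -/
def C1delRaw (u v : GWord) : Prop :=
  ∃ (x y : GWord) (a : ℕ) (h s : Bool),
    (∀ e ∈ x ++ y, e.1 ≠ a) ∧
    u = x ++ (a, h, s) :: (a, !h, s) :: y ∧
    v = x ++ y

/-- Raw W move: interchange of two adjacent endpoints that are both tails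
(of any two chords, regardless of signs). -/
def WRaw (u v : GWord) : Prop :=
  ∃ (x y : GWord) (a b : ℕ) (s t : Bool),
    u = x ++ (a, false, s) :: (b, false, t) :: y ∧
    v = x ++ (b, false, t) :: (a, false, s) :: y

/-- Raw C2 move (deleting direction): deletion of a pair of chords of opposite
signs whose two tails occupy adjacent positions and whose two heads occupy
adjacent positions. -/
def C2delRaw (u v : GWord) : Prop :=
  ∃ (x y z : GWord) (a b : ℕ) (s : Bool),
    a ≠ b ∧
    (∀ e ∈ x ++ y ++ z, e.1 ≠ a ∧ e.1 ≠ b) ∧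
    (u = x ++ (a, false, s) :: (b, false, !s) :: (y ++ (a, true, s) :: (b, true, !s) :: z) ∨
     u = x ++ (a, false, s) :: (b, false, !s) :: (y ++ (b, true, !s) :: (a, true, s) :: z)) ∧
    v = x ++ y ++ z

/-- Raw C3 move: the Gauss-code translation of the planar Reidemeister move of
type 3.  Three strands `A`, `B`, `C` (modelled on the lines `y = -1`, `y = x`,
`y = -x` and their directions `(1,0)`, `(1,1)`, `(-1,1)`, possibly reversed
according to `dA`, `dB`, `dC`) meet pairwise in the chords `a = AB`, `b = AC`,
`c = BC`; `oAB`, `oAC`, `oBC` record which strand passes over in each pair and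
must come from a linear height order.  The six endpoints form three adjacent
pairs, one on each strand, and the move exchanges the order within each pair;
the head/tail pattern is determined by the heights and the signs by the heights
and the directions, as in a planar diagram. -/
def C3Raw (u v : GWord) : Prop :=
  ∃ (x y z t : GWord) (a b c : ℕ) (oAB oAC oBC dA dB dC swap : Bool),
    a ≠ b ∧ a ≠ c ∧ b ≠ c ∧
    (oAB = oBC → oAC = oAB) ∧
    (let sa : Bool := (dA == dB) == oAB
     let sb : Bool := (dA == dC) == oAC
     let sc : Bool := (dB == dC) == oBC
     let PA : GWord :=
       if dA then [(a, !oAB, sa), (b, !oAC, sb)] else [(b, !oAC, sb), (a, !oAB, sa)]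
     let PB : GWord :=
       if dB then [(a, oAB, sa), (c, !oBC, sc)] else [(c, !oBC, sc), (a, oAB, sa)]
     let PC : GWord :=
       if dC then [(b, oAC, sb), (c, oBC, sc)] else [(c, oBC, sc), (b, oAC, sb)]
     let Q1 : GWord := if swap then PC else PB
     let Q2 : GWord := if swap then PB else PC
     u = x ++ PA ++ y ++ Q1 ++ z ++ Q2 ++ t ∧
     v = x ++ PA.reverse ++ y ++ Q1.reverse ++ z ++ Q2.reverse ++ t)

/-- One welded Reidemeister move (C1, C2, C3 or W, in either direction),
performed up to cyclic permutation and renaming of chords. -/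
def WeldedStep (u v : GWord) : Prop :=
  ∃ u₀ v₀ : GWord, CyclicRename u u₀ ∧ CyclicRename v₀ v ∧
    (C1delRaw u₀ v₀ ∨ C1delRaw v₀ u₀ ∨ C2delRaw u₀ v₀ ∨ C2delRaw v₀ u₀ ∨
     C3Raw u₀ v₀ ∨ C3Raw v₀ u₀ ∨ WRaw u₀ v₀)

/-- Welded equivalence: two Gauss codes are welded-equivalent if they are
related by a finite sequence of C1, C2, C3 and W moves (on cyclic words). -/
def WeldedEquiv : GWord → GWord → Prop := Relation.EqvGen WeldedStep

/-- A Gauss code represents the trivial welded knot iff it is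
welded-equivalent to the empty code. -/
def RepresentsTrivial (w : GWord) : Prop := WeldedEquiv w []

/-- One C1 or W move (in either direction), up to cyclic permutation and
renaming of chords. -/
def CWStep (u v : GWord) : Prop :=
  ∃ u₀ v₀ : GWord, CyclicRename u u₀ ∧ CyclicRename v₀ v ∧
    (C1delRaw u₀ v₀ ∨ C1delRaw v₀ u₀ ∨ WRaw u₀ v₀)

/-- Relatedness by a finite sequence of C1 and W moves alone. -/
def CWEquiv : GWord → GWord → Prop := Relation.EqvGen CWStep

/-- One W move, up to cyclic permutation. -/
def WStepRot (u v : GWord) : Prop :=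
  ∃ u₀ v₀ : GWord, RotEq u u₀ ∧ RotEq v₀ v ∧ WRaw u₀ v₀

/-- One deleting C1 move, up to cyclic permutation. -/
def C1StepRot (u v : GWord) : Prop :=
  ∃ u₀ v₀ : GWord, RotEq u u₀ ∧ RotEq v₀ v ∧ C1delRaw u₀ v₀

/-- In the linear word `v`, no chord has its head occurring strictly before
its tail. -/
def TailsFirst (v : GWord) : Prop :=
  ¬ ∃ (x y z : GWord) (a : ℕ) (s s' : Bool),
      v = x ++ (a, true, s) :: (y ++ (a, false, s') :: z)

/-- A Gauss code is descending if the cyclic word can be cut at some point and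
read in one of the two directions so that every chord's tail occurs before its
head. -/
def IsDescending (w : GWord) : Prop :=
  ∃ n : ℕ, TailsFirst (w.rotate n) ∨ TailsFirst ((w.rotate n).reverse)

/-- `c(D)`: the minimal number of chords of a Gauss code representing the same
welded knot as `D`. -/
noncomputable def minCrossing (D : GWord) : ℕ :=
  sInf {n : ℕ | ∃ D' : GWord, IsGaussCode D' ∧ WeldedEquiv D D' ∧ (chordSet D').ncard = n}

/-- `u(D)`: the minimal cardinality of a set `S` of chords of `D` such that the
crossing change at `S` turns `D` into a Gauss code representing the trivial
welded knot. -/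
noncomputable def unknottingNumWord (D : GWord) : ℕ :=
  sInf {k : ℕ | ∃ S : Finset ℕ, ↑S ⊆ chordSet D ∧ S.card = k ∧
    WeldedEquiv (crossingChange S D) []}

/-- `u(K)`: the minimum of `u(D')` over all Gauss codes `D'` representing the
same welded knot as `D`. -/
noncomputable def unknottingNum (D : GWord) : ℕ :=
  sInf {k : ℕ | ∃ D' : GWord, IsGaussCode D' ∧ WeldedEquiv D D' ∧ unknottingNumWord D' = k}

/-!
Change the crossings at the chords whose head is met before their tail when the linear word is
read from its start; afterwards every tail precedes its head. Such a tails-first Gauss code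
reduces to the empty code: its first head is preceded only by tails, among them the tail of its
own chord, so W moves carry that tail up to the head, a C1 move deletes the chord, and what
remains is again a tails-first Gauss code.
-/

section Sublist

variable {α : Type*}

theorem pair_sublist_iff {x y : α} {l : List α} :
    [x, y].Sublist l ↔ ∃ a b c, l = a ++ x :: (b ++ y :: c) := by
  constructor
  · intro h
    obtain ⟨r₁, r₂, rfl, hx, hy⟩ := List.cons_sublist_iff.1 h
    obtain ⟨a, b, rfl⟩ := List.append_of_mem hx
    obtain ⟨b', c, rfl⟩ := List.append_of_mem (List.singleton_sublist.1 hy)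
    exact ⟨a, b ++ b', c, by simp⟩
  · rintro ⟨a, b, c, rfl⟩
    exact ((List.singleton_sublist.2 (by simp)).cons_cons x).trans (List.sublist_append_right a _)

theorem filter_eq_pair_of_pair_sublist {p : α → Bool} {l : List α} (hl : l.countP p = 2)
    {x y : α} (hx : p x) (hy : p y) (h : [x, y].Sublist l) : l.filter p = [x, y] := by
  have hsub := h.filter p
  rw [List.filter_cons_of_pos hx, List.filter_cons_of_pos hy, List.filter_nil] at hsub
  exact (hsub.eq_of_length (by rw [← List.countP_eq_length_filter, hl]; rfl)).symm

end Sublist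

theorem tailsFirst_iff {w : GWord} :
    TailsFirst w ↔ ∀ a s s', ¬ [(a, true, s), (a, false, s')].Sublist w := by
  simp only [TailsFirst, pair_sublist_iff]
  grind

theorem TailsFirst.sublist {v w : GWord} (hw : TailsFirst w) (h : v.Sublist w) : TailsFirst v :=
  tailsFirst_iff.2 fun a s s' hv => tailsFirst_iff.1 hw a s s' (hv.trans h)

theorem chordSet_crossingChange (S : Finset ℕ) (w : GWord) :
    chordSet (crossingChange S w) = chordSet w := by
  ext a
  simp only [chordSet, crossingChange, Set.mem_ofPred_eq, List.mem_map]
  constructor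
  · rintro ⟨_, ⟨e, he, rfl⟩, rfl⟩
    exact ⟨e, he, by split <;> rfl⟩
  · rintro ⟨e, he, rfl⟩
    exact ⟨_, ⟨e, he, rfl⟩, by split <;> rfl⟩

theorem crossingChange_crossingChange (S : Finset ℕ) (w : GWord) :
    crossingChange S (crossingChange S w) = w := by
  simp only [crossingChange, List.map_map]
  conv_rhs => rw [← List.map_id w]
  refine List.map_congr_left fun e _ => ?_
  by_cases he : e.1 ∈ S <;> simp [he]

theorem isGaussCode_crossingChange (S : Finset ℕ) {w : GWord} (hw : IsGaussCode w) :
    IsGaussCode (crossingChange S w) := by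
  intro a ha
  rw [chordSet_crossingChange] at ha
  obtain ⟨hcount, σ, htail, hhead⟩ := hw a ha
  refine ⟨?_, ?_⟩
  · rw [crossingChange, List.countP_map, ← hcount]
    exact List.countP_congr fun e _ => by simp only [Function.comp]; split <;> rfl
  · by_cases haS : a ∈ S
    · exact ⟨!σ, List.mem_map.2 ⟨_, hhead, by simp [haS]⟩,
        List.mem_map.2 ⟨_, htail, by simp [haS]⟩⟩
    · exact ⟨σ, List.mem_map.2 ⟨_, htail, by simp [haS]⟩,
        List.mem_map.2 ⟨_, hhead, by simp [haS]⟩⟩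

theorem isGaussCode_deleteChord {w : GWord} (hw : IsGaussCode w) (a : ℕ) :
    IsGaussCode (deleteChord a w) := by
  rintro b ⟨e, he, rfl⟩
  have hba : e.1 ≠ a := by simpa [deleteChord] using (List.mem_filter.1 he).2
  obtain ⟨hcount, σ, htail, hhead⟩ := hw e.1 ⟨e, (List.mem_filter.1 he).1, rfl⟩
  refine ⟨?_, σ, List.mem_filter.2 ⟨htail, by simpa⟩,
    List.mem_filter.2 ⟨hhead, by simpa⟩⟩
  rw [deleteChord, List.countP_filter, ← hcount]
  refine List.countP_congr fun f _ => ?_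
  by_cases hf : f.1 = e.1 <;> simp [hf, hba]

theorem length_deleteChord_lt {w : GWord} {a : ℕ} (ha : a ∈ chordSet w) :
    (deleteChord a w).length < w.length := by
  obtain ⟨e, he, rfl⟩ := ha
  exact List.length_filter_lt_length_iff_exists.2 ⟨e, he, by simp⟩

theorem cyclicRename_refl (w : GWord) : CyclicRename w w :=
  ⟨0, id, Function.injective_id, by simp [relabelWord]⟩

theorem CWEquiv.refl (w : GWord) : CWEquiv w w := Relation.EqvGen.refl w

theorem CWEquiv.trans {u v w : GWord} (huv : CWEquiv u v) (hvw : CWEquiv v w) : CWEquiv u w :=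
  Relation.EqvGen.trans u v w huv hvw

theorem cwEquiv_of_wRaw {u v : GWord} (h : WRaw u v) : CWEquiv u v :=
  .rel _ _ ⟨u, v, cyclicRename_refl u, cyclicRename_refl v, .inr (.inr h)⟩

theorem cwEquiv_of_c1delRaw {u v : GWord} (h : C1delRaw u v) : CWEquiv u v :=
  .rel _ _ ⟨u, v, cyclicRename_refl u, cyclicRename_refl v, .inl h⟩

theorem cwEquiv_tail_past_tails {p : GWord} (hp : ∀ e ∈ p, e.2.1 = false) (a : ℕ) (s : Bool)
    (x y : GWord) : CWEquiv (x ++ (a, false, s) :: (p ++ y)) (x ++ p ++ (a, false, s) :: y) := by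
  induction p generalizing x with
  | nil => simpa using CWEquiv.refl _
  | cons e p ih =>
    obtain ⟨b, hb, t⟩ := e
    obtain rfl : hb = false := hp _ List.mem_cons_self
    have hswap : CWEquiv (x ++ (a, false, s) :: ((b, false, t) :: p ++ y))
        (x ++ [(b, false, t)] ++ (a, false, s) :: (p ++ y)) :=
      cwEquiv_of_wRaw ⟨x, p ++ y, a, b, s, t, rfl, by simp⟩
    simpa using hswap.trans (ih (fun f hf => hp f (List.mem_cons_of_mem _ hf)) _)

theorem forall_tail_or_exists_first_head (w : GWord) :
    (∀ e ∈ w, e.2.1 = false) ∨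
      ∃ p a s q, w = p ++ (a, true, s) :: q ∧ ∀ e ∈ p, e.2.1 = false := by
  induction w with
  | nil => exact .inl (by simp)
  | cons e w ih =>
    obtain ⟨a, _ | _, s⟩ := e
    · rcases ih with h | ⟨p, b, t, q, rfl, hp⟩
      · exact .inl (by simpa using h)
      · exact .inr ⟨(a, false, s) :: p, b, t, q, rfl, by simpa using hp⟩
    · exact .inr ⟨[], a, s, w, rfl, by simp⟩

theorem eq_nil_of_forall_tail {w : GWord} (hw : IsGaussCode w) (h : ∀ e ∈ w, e.2.1 = false) :
    w = [] := by
  refine List.eq_nil_iff_forall_not_mem.2 fun e he => ?_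
  obtain ⟨-, s, -, hhead⟩ := hw e.1 ⟨e, he, rfl⟩
  simpa using h _ hhead

theorem deleteChord_eq_self {a : ℕ} {w : GWord} (h : ∀ e ∈ w, e.1 ≠ a) :
    deleteChord a w = w :=
  List.filter_eq_self.2 fun e he => by simpa using h e he

theorem IsGaussCode.sign_eq_and_ne {p₁ p₂ q : GWord} {a : ℕ} {σ s : Bool}
    (hw : IsGaussCode (p₁ ++ (a, false, σ) :: p₂ ++ (a, true, s) :: q)) :
    s = σ ∧ ∀ e ∈ p₁ ++ p₂ ++ q, e.1 ≠ a := by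
  obtain ⟨hcount, τ, htail, hhead⟩ := hw a ⟨(a, false, σ), by simp, rfl⟩
  simp only [List.countP_append, List.countP_cons, beq_self_eq_true, ite_true] at hcount
  have h₁ := List.countP_eq_zero.1 (show p₁.countP (fun e : GEntry => e.1 == a) = 0 by omega)
  have h₂ := List.countP_eq_zero.1 (show p₂.countP (fun e : GEntry => e.1 == a) = 0 by omega)
  have h₃ := List.countP_eq_zero.1 (show q.countP (fun e : GEntry => e.1 == a) = 0 by omega)
  simp only [beq_iff_eq] at h₁ h₂ h₃
  have hfree : ∀ e ∈ p₁ ++ p₂ ++ q, e.1 ≠ a := by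
    simp only [List.mem_append]
    rintro e ((he | he) | he)
    exacts [h₁ e he, h₂ e he, h₃ e he]
  have hocc : ∀ e ∈ p₁ ++ (a, false, σ) :: p₂ ++ (a, true, s) :: q, e.1 = a →
      e = (a, false, σ) ∨ e = (a, true, s) := by
    intro e he hea
    simp only [List.mem_append, List.mem_cons] at he
    rcases he with (he | he | he) | he | he
    exacts [(h₁ e he hea).elim, .inl he, (h₂ e he hea).elim, .inr he, (h₃ e he hea).elim]
  refine ⟨?_, hfree⟩
  rcases hocc _ htail rfl with h | h <;> rcases hocc _ hhead rfl with h' | h' <;> simp_all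

theorem cwEquiv_deleteChord_of_first_head {w p q : GWord} {a : ℕ} {s : Bool}
    (hw : IsGaussCode w) (hT : TailsFirst w) (hwpq : w = p ++ (a, true, s) :: q)
    (hp : ∀ e ∈ p, e.2.1 = false) : CWEquiv w (deleteChord a w) := by
  obtain ⟨-, σ, htail, -⟩ := hw a ⟨(a, true, s), by simp [hwpq], rfl⟩
  have htail_p : (a, false, σ) ∈ p := by
    rw [hwpq, List.mem_append, List.mem_cons] at htail
    rcases htail with h | h | h
    · exact h
    · simp at h
    · obtain ⟨y, z, rfl⟩ := List.append_of_mem h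
      exact (hT ⟨p, y, z, a, s, σ, hwpq⟩).elim
  obtain ⟨p₁, p₂, rfl⟩ := List.append_of_mem htail_p
  subst hwpq
  obtain ⟨rfl, hfree⟩ := hw.sign_eq_and_ne
  have hdelete :
      deleteChord a (p₁ ++ (a, false, s) :: p₂ ++ (a, true, s) :: q) = p₁ ++ p₂ ++ q := by
    rw [← deleteChord_eq_self hfree]
    simp [deleteChord, List.filter_append]
  rw [hdelete]
  refine .trans ?_ (cwEquiv_of_c1delRaw ⟨p₁ ++ p₂, q, a, false, s, hfree, rfl, rfl⟩)
  simpa using cwEquiv_tail_past_tails (fun e he => hp e (by simp [he])) a s p₁ ((a, true, s) :: q)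

theorem cwEquiv_nil_of_tailsFirst {w : GWord} (hw : IsGaussCode w) (hT : TailsFirst w) :
    CWEquiv w [] := by
  rcases forall_tail_or_exists_first_head w with h | ⟨p, a, s, q, hwpq, hp⟩
  · rw [eq_nil_of_forall_tail hw h]
    exact .refl []
  · have : (deleteChord a w).length < w.length :=
      length_deleteChord_lt ⟨(a, true, s), by simp [hwpq], rfl⟩
    exact (cwEquiv_deleteChord_of_first_head hw hT hwpq hp).trans
      (cwEquiv_nil_of_tailsFirst (isGaussCode_deleteChord hw a) (hT.sublist List.filter_sublist))
termination_by w.length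

def headFirstChords (w : GWord) : Finset ℕ :=
  (w.map Prod.fst).toFinset.filter fun a => ∃ s s', [(a, true, s), (a, false, s')].Sublist w

theorem coe_headFirstChords_subset (w : GWord) : ↑(headFirstChords w) ⊆ chordSet w := by
  intro a ha
  obtain ⟨e, he, rfl⟩ := List.mem_map.1 (List.mem_toFinset.1 (Finset.mem_filter.1 ha).1)
  exact ⟨e, he, rfl⟩

theorem tailsFirst_crossingChange_headFirstChords {w : GWord} (hw : IsGaussCode w) :
    TailsFirst (crossingChange (headFirstChords w) w) := by
  refine tailsFirst_iff.2 fun a s s' h => ?_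
  have hback := h.map fun e => if e.1 ∈ headFirstChords w then (e.1, !e.2.1, !e.2.2) else e
  change List.Sublist _ (crossingChange _ (crossingChange _ w)) at hback
  rw [crossingChange_crossingChange] at hback
  by_cases ha : a ∈ headFirstChords w
  · simp only [ha, List.map_cons, List.map_nil, if_true, Bool.not_true, Bool.not_false] at hback
    obtain ⟨σ, σ', hσ⟩ := (Finset.mem_filter.1 ha).2
    have hcount := (hw a (coe_headFirstChords_subset w ha)).1
    have := (filter_eq_pair_of_pair_sublist hcount (by simp) (by simp) hback).symm.trans
      (filter_eq_pair_of_pair_sublist hcount (by simp) (by simp) hσ)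
    simp at this
  · simp only [ha, List.map_cons, List.map_nil, if_false] at hback
    have haw : a ∈ w.map Prod.fst := List.mem_map.2 ⟨_, hback.subset List.mem_cons_self, rfl⟩
    exact ha (Finset.mem_filter.2 ⟨List.mem_toFinset.2 haw, s, s', hback⟩)

/-- For every Gauss code `D` there exists a set `S` of
chords of `D` such that the code obtained from `D` by the crossing change at
`S` can be transformed into the empty code by a finite sequence of C1 and W
moves alone. -/
theorem crossing_changes_then_C1_W_trivial (D : GWord) (hD : IsGaussCode D) :
    ∃ S : Finset ℕ, ↑S ⊆ chordSet D ∧ CWEquiv (crossingChange S D) [] :=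
  ⟨headFirstChords D, coe_headFirstChords_subset D,
    cwEquiv_nil_of_tailsFirst (isGaussCode_crossingChange _ hD)
      (tailsFirst_crossingChange_headFirstChords hD)⟩
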